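/- The class of string languages recognized by well-ordered ordered context-free grammars equals the class of context-free languages; likewise the class of string languages recognized by ordered context-free grammars having least parse trees equals the class of context-free languages. -/

import Mathlib

namespace Ocfg

/-- A symbol: nonterminal or terminal. -/
inductive Sym (N T : Type) : Type
  | nt : N → Sym N T
  | tm : T → Sym N T

/-- An (ordered) context-free grammar: each nonterminal has an ordered
list of right-hand sides; `start` is the start nonterminal. -/
structure OCFG (N T : Type) : Type where
  prods : N → List (List (Sym N T))
  start : N

/-- Ordered ranked trees used as parse trees: terminal leaves, ε-leaves,
and internal nodes labelled by a nonterminal together with the index of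
the rule applied there. -/
inductive PTree (N T : Type) : Type
  | leaf : T → PTree N T
  | eps  : PTree N T
  | node : N → ℕ → List (PTree N T) → PTree N T

mutual
/-- `ParseFrom G A w t`: `t` is a parse tree with root nonterminal `A`
and yield `w`. -/
inductive ParseFrom {N T : Type} (G : OCFG N T) : N → List T → PTree N T → Prop
  | epsNode (A : N) (i : ℕ) :
      (G.prods A)[i]? = some [] →
      ParseFrom G A [] (PTree.node A i [PTree.eps])
  | node (A : N) (i : ℕ) (r : List (Sym N T)) (w : List T) (cs : List (PTree N T)) :
      (G.prods A)[i]? = some r → r ≠ [] → ParseSeq G r w cs →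
      ParseFrom G A w (PTree.node A i cs)

/-- `ParseSeq G r w cs`: the trees `cs` match, in order, the symbols of `r`,
with concatenated yield `w`. -/
inductive ParseSeq {N T : Type} (G : OCFG N T) : List (Sym N T) → List T → List (PTree N T) → Prop
  | nil : ParseSeq G [] [] []
  | consTm (a : T) (r : List (Sym N T)) (w : List T) (cs : List (PTree N T)) :
      ParseSeq G r w cs →
      ParseSeq G (Sym.tm a :: r) (a :: w) (PTree.leaf a :: cs)
  | consNt (A : N) (t : PTree N T) (wA : List T) (r : List (Sym N T)) (w : List T)
      (cs : List (PTree N T)) :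
      ParseFrom G A wA t → ParseSeq G r w cs →
      ParseSeq G (Sym.nt A :: r) (wA ++ w) (t :: cs)
end

/-- The set `P_G(w)` of parse trees of `w`. -/
def parseTrees {N T : Type} (G : OCFG N T) (w : List T) : Set (PTree N T) :=
  {t | ParseFrom G G.start w t}

/-- `n(t)`: the sequence of rule indices of `t`, in pre-order. -/
def PTree.idxSeq {N T : Type} : PTree N T → List ℕ
  | .leaf _ => []
  | .eps => []
  | .node _ i cs => i :: (cs.attach.map (fun c => PTree.idxSeq c.1)).flatten
decreasing_by
  have := List.sizeOf_lt_of_mem c.2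
  simp_wf
  omega

/-- The order `≺_G` on parse trees: lexicographic comparison of the
pre-order rule-index sequences. -/
def treeLT {N T : Type} (t₁ t₂ : PTree N T) : Prop :=
  List.Lex (· < ·) t₁.idxSeq t₂.idxSeq

/-- One-step derivation relation `⇒` of the underlying CFG. -/
def OCFG.Step {N T : Type} (G : OCFG N T) (u v : List (Sym N T)) : Prop :=
  ∃ (u₁ u₂ : List (Sym N T)) (A : N) (r : List (Sym N T)),
    r ∈ G.prods A ∧ u = u₁ ++ Sym.nt A :: u₂ ∧ v = u₁ ++ r ++ u₂

/-- `⇒*`. -/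
def OCFG.Derives {N T : Type} (G : OCFG N T) : List (Sym N T) → List (Sym N T) → Prop :=
  Relation.ReflTransGen G.Step

/-- A nonterminal is useful if it occurs in some sentential form derivable from
the start symbol and derives some terminal string. -/
def Useful {N T : Type} (G : OCFG N T) (A : N) : Prop :=
  (∃ u₁ u₂ : List (Sym N T), G.Derives [Sym.nt G.start] (u₁ ++ Sym.nt A :: u₂)) ∧
  (∃ w : List T, G.Derives [Sym.nt A] (w.map Sym.tm))

/-- `G` is cyclic if `A ⇒⁺ A` for some nonterminal `A`. -/
def Cyclic {N T : Type} (G : OCFG N T) : Prop :=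
  ∃ A : N, Relation.TransGen G.Step [Sym.nt A] [Sym.nt A]

/-- `G` has no ε-rules. -/
def NoEpsRules {N T : Type} (G : OCFG N T) : Prop :=
  ∀ (A : N) (r : List (Sym N T)), r ∈ G.prods A → r ≠ []

/-- A unit-rule step: `A → B` is a rule of `G`. -/
def UnitStep {N T : Type} (G : OCFG N T) (A B : N) : Prop :=
  [Sym.nt B] ∈ G.prods A

/-- `G` has a cycle of unit rules. -/
def HasUnitCycle {N T : Type} (G : OCFG N T) : Prop :=
  ∃ A : N, Relation.TransGen (UnitStep G) A A

/-- `G` is well-ordered: for every string `w`, every nonempty subset of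
`P_G(w)` has a `≺_G`-least element. -/
def WellOrderedG {N T : Type} (G : OCFG N T) : Prop :=
  ∀ (w : List T) (Φ : Set (PTree N T)), Φ ⊆ parseTrees G w → Φ.Nonempty →
    ∃ t ∈ Φ, ∀ t' ∈ Φ, t = t' ∨ treeLT t t'

/-- `t` is the `≺_G`-least parse tree of `w`. -/
def IsLeastTree {N T : Type} (G : OCFG N T) (w : List T) (t : PTree N T) : Prop :=
  ParseFrom G G.start w t ∧ ∀ t', ParseFrom G G.start w t' → t = t' ∨ treeLT t t'

/-- `G` has least parse trees. -/
def HasLeastTrees {N T : Type} (G : OCFG N T) : Prop :=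
  ∀ w : List T, (parseTrees G w).Nonempty → ∃ t, IsLeastTree G w t

/-- Derivations of a given length (number of steps). -/
inductive DerivesIn {N T : Type} (G : OCFG N T) : List (Sym N T) → List (Sym N T) → ℕ → Prop
  | refl (u : List (Sym N T)) : DerivesIn G u u 0
  | step (u v w : List (Sym N T)) (n : ℕ) :
      G.Step u v → DerivesIn G v w n → DerivesIn G u w (n + 1)

/-- Number of rule applications in a parse tree (= length of the
corresponding leftmost derivation). -/
def PTree.numRules {N T : Type} : PTree N T → ℕ
  | .leaf _ => 0
  | .eps => 0
  | .node _ _ cs => 1 + ((cs.attach.map (fun c => PTree.numRules c.1)).foldr (· + ·) 0)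
decreasing_by
  have := List.sizeOf_lt_of_mem c.2
  simp_wf
  omega

/-- Height of a tree: a single leaf has height 0. -/
def PTree.height {N T : Type} : PTree N T → ℕ
  | .leaf _ => 0
  | .eps => 0
  | .node _ _ cs => 1 + ((cs.attach.map (fun c => PTree.height c.1)).foldr max 0)
decreasing_by
  have := List.sizeOf_lt_of_mem c.2
  simp_wf
  omega

/-- The language of `G`. -/
def langOf {N T : Type} (G : OCFG N T) : Language T :=
  {w | ∃ t, ParseFrom G G.start w t}

end Ocfg

/-!
One direction is immediate: an ordered grammar over finitely many nonterminals is in particular a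
context-free grammar. Conversely, a context-free language has a grammar without ε-rules and unit
rules, except for an ε-rule on a fresh start symbol that occurs on no right-hand side. In such a
grammar every inner node of a parse tree of `w` has a terminal child or at least two children with
nonempty yields, so a parse tree of `w` has at most `2|w| + 1` nodes; as rule indices are bounded,
`w` has only finitely many parse trees. The pre-order index sequences of the parse trees with a
given root form a prefix code, so `≺_G` is a linear order on them, and a finite linear order is a
well-order.
-/

namespace Ocfg

open Classical

variable {N T : Type}

section ParseTrees

variable {G : OCFG N T}

theorem ParseSeq.nil_inv {w : List T} {cs : List (PTree N T)} (h : ParseSeq G [] w cs) :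
    w = [] ∧ cs = [] := by
  cases h; exact ⟨rfl, rfl⟩

theorem ParseSeq.terminals (w : List T) : ParseSeq G (w.map Sym.tm) w (w.map PTree.leaf) := by
  induction w with
  | nil => exact .nil
  | cons a w ih => exact .consTm a _ _ _ ih

theorem ParseSeq.singleton {A : N} {w : List T} {t : PTree N T} (h : ParseFrom G A w t) :
    ParseSeq G [Sym.nt A] w [t] := by
  simpa using ParseSeq.consNt A t w [] [] [] h .nil

theorem ParseSeq.append {x y : List (Sym N T)} {w₁ w₂ : List T} {cs₁ cs₂ : List (PTree N T)}
    (h₁ : ParseSeq G x w₁ cs₁) (h₂ : ParseSeq G y w₂ cs₂) :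
    ParseSeq G (x ++ y) (w₁ ++ w₂) (cs₁ ++ cs₂) := by
  induction x generalizing w₁ cs₁ with
  | nil => obtain ⟨rfl, rfl⟩ := h₁.nil_inv; exact h₂
  | cons s x ih =>
    cases h₁ with
    | consTm a _ _ _ hs => exact .consTm a _ _ _ (ih hs)
    | consNt A t wA _ _ _ ht hs => simpa using ParseSeq.consNt A t wA _ _ _ ht (ih hs)

theorem ParseSeq.of_append {x y : List (Sym N T)} {w : List T} {cs : List (PTree N T)}
    (h : ParseSeq G (x ++ y) w cs) :
    ∃ w₁ w₂ cs₁ cs₂, w = w₁ ++ w₂ ∧ cs = cs₁ ++ cs₂ ∧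
      ParseSeq G x w₁ cs₁ ∧ ParseSeq G y w₂ cs₂ := by
  induction x generalizing w cs with
  | nil => exact ⟨[], w, [], cs, rfl, rfl, .nil, h⟩
  | cons s x ih =>
    cases h with
    | consTm a _ _ _ hs =>
      obtain ⟨w₁, w₂, cs₁, cs₂, rfl, rfl, hx, hy⟩ := ih hs
      exact ⟨a :: w₁, w₂, _ :: cs₁, cs₂, rfl, rfl, .consTm a _ _ _ hx, hy⟩
    | consNt A t wA _ _ _ ht hs =>
      obtain ⟨w₁, w₂, cs₁, cs₂, rfl, rfl, hx, hy⟩ := ih hs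
      exact ⟨wA ++ w₁, w₂, t :: cs₁, cs₂, by simp, rfl, .consNt A t wA _ _ _ ht hx, hy⟩

theorem exists_parseFrom_iff {A : N} {w : List T} :
    (∃ t, ParseFrom G A w t) ↔ ∃ r ∈ G.prods A, ∃ cs, ParseSeq G r w cs := by
  constructor
  · rintro ⟨t, ht⟩
    cases ht with
    | epsNode _ _ hi => exact ⟨[], List.mem_of_getElem? hi, [], .nil⟩
    | node _ _ r _ cs hi _ hs => exact ⟨r, List.mem_of_getElem? hi, cs, hs⟩
  · rintro ⟨r, hr, cs, hs⟩
    obtain ⟨i, hi⟩ := List.mem_iff_getElem?.mp hr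
    rcases eq_or_ne r [] with rfl | hne
    · obtain ⟨rfl, rfl⟩ := hs.nil_inv
      exact ⟨_, .epsNode A i hi⟩
    · exact ⟨_, .node A i r w cs hi hne hs⟩

theorem exists_parseFrom_of_parseSeq {A : N} {r : List (Sym N T)} {w : List T}
    {cs : List (PTree N T)} (hr : r ∈ G.prods A) (hs : ParseSeq G r w cs) :
    ∃ t, ParseFrom G A w t :=
  exists_parseFrom_iff.2 ⟨r, hr, cs, hs⟩

end ParseTrees

section ToCFG

def Sym.toSymbol : Sym N T → Symbol T N
  | .nt A => .nonterminal A
  | .tm a => .terminal a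

def Sym.ofSymbol : Symbol T N → Sym N T
  | .nonterminal A => .nt A
  | .terminal a => .tm a

@[simp] theorem Sym.ofSymbol_toSymbol (s : Sym N T) : Sym.ofSymbol s.toSymbol = s := by
  cases s <;> rfl

noncomputable abbrev OCFG.toCFG [Fintype N] (G : OCFG N T) : ContextFreeGrammar T where
  NT := N
  initial := G.start
  rules := Finset.univ.biUnion fun A =>
    ((G.prods A).map fun r => ⟨A, r.map Sym.toSymbol⟩).toFinset

variable [Fintype N] {G : OCFG N T}

theorem OCFG.mem_toCFG_rules {ρ : ContextFreeRule T N} :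
    ρ ∈ G.toCFG.rules ↔ ∃ A, ∃ r ∈ G.prods A, ρ = ⟨A, r.map Sym.toSymbol⟩ := by
  simp [OCFG.toCFG, Finset.mem_biUnion, eq_comm]

theorem OCFG.toCFG_produces {A : N} {r : List (Sym N T)} (hr : r ∈ G.prods A) :
    G.toCFG.Produces [.nonterminal A] (r.map Sym.toSymbol) :=
  ⟨_, OCFG.mem_toCFG_rules.2 ⟨A, r, hr, rfl⟩, ContextFreeRule.Rewrites.input_output⟩

mutual
theorem ParseFrom.toCFG_derives {A : N} {w : List T} {t : PTree N T} :
    ParseFrom G A w t → G.toCFG.Derives [.nonterminal A] (w.map .terminal)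
  | .epsNode _ _ hi => (OCFG.toCFG_produces (List.mem_of_getElem? hi)).single
  | .node _ _ _ _ _ hi _ hs =>
    (OCFG.toCFG_produces (List.mem_of_getElem? hi)).trans_derives hs.toCFG_derives
theorem ParseSeq.toCFG_derives {r : List (Sym N T)} {w : List T} {cs : List (PTree N T)} :
    ParseSeq G r w cs → G.toCFG.Derives (r.map Sym.toSymbol) (w.map .terminal)
  | .nil => .refl _
  | .consTm a _ _ _ hs => hs.toCFG_derives.append_left [.terminal a]
  | .consNt _ _ wA _ _ _ ht hs => by
    simpa [Sym.toSymbol] using (ht.toCFG_derives.append_right _).trans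
      (hs.toCFG_derives.append_left (wA.map .terminal))
end

theorem exists_parseSeq_of_toCFG_derives {α : List (Symbol T N)} {w : List T}
    (h : G.toCFG.Derives α (w.map .terminal)) : ∃ cs, ParseSeq G (α.map Sym.ofSymbol) w cs := by
  induction h using Relation.ReflTransGen.head_induction_on with
  | refl => exact ⟨_, by simpa [Function.comp_def, Sym.ofSymbol] using ParseSeq.terminals w⟩
  | head hstep _ ih =>
    obtain ⟨cs, hcs⟩ := ih
    obtain ⟨ρ, hρ, hrw⟩ := hstep
    obtain ⟨p, q, rfl, rfl⟩ := hrw.exists_parts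
    obtain ⟨A, r, hr, rfl⟩ := OCFG.mem_toCFG_rules.1 hρ
    simp only [List.map_append, List.map_map, Function.comp_def, Sym.ofSymbol_toSymbol,
      List.map_id', List.append_assoc] at hcs
    obtain ⟨w₁, w₂₃, cs₁, cs₂₃, rfl, rfl, hp, h₂₃⟩ := hcs.of_append
    obtain ⟨w₂, w₃, cs₂, cs₃, rfl, rfl, hr₂, hq⟩ := h₂₃.of_append
    obtain ⟨t, ht⟩ := exists_parseFrom_of_parseSeq hr hr₂
    exact ⟨_, by simpa [Sym.ofSymbol] using hp.append (.consNt A t w₂ _ w₃ _ ht hq)⟩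

theorem langOf_eq_toCFG_language (G : OCFG N T) : langOf G = G.toCFG.language := by
  ext w
  refine ⟨fun ⟨t, ht⟩ => ht.toCFG_derives, fun h => ?_⟩
  obtain ⟨cs, hcs⟩ := exists_parseSeq_of_toCFG_derives h
  cases hcs with
  | consNt _ t _ _ _ _ ht hs =>
    obtain ⟨rfl, rfl⟩ := hs.nil_inv
    exact ⟨t, by simpa using ht⟩

theorem isContextFree_langOf (G : OCFG N T) : (langOf G).IsContextFree :=
  ⟨G.toCFG, (langOf_eq_toCFG_language G).symm⟩

end ToCFG

section OfCFG

@[simp] def mapSymbol {N' : Type} (f : N → N') : Symbol T N → Symbol T N'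
  | .terminal a => .terminal a
  | .nonterminal A => .nonterminal (f A)

theorem derives_map {g₁ g₂ : ContextFreeGrammar T} (f : g₁.NT → g₂.NT) (S : Set g₁.NT)
    (hS : ∀ ρ ∈ g₁.rules, ρ.input ∈ S →
      (∀ B, .nonterminal B ∈ ρ.output → B ∈ S) ∧
      (⟨f ρ.input, ρ.output.map (mapSymbol f)⟩ : ContextFreeRule T g₂.NT) ∈ g₂.rules)
    {u v : List (Symbol T g₁.NT)} (h : g₁.Derives u v)
    (hu : ∀ B, .nonterminal B ∈ u → B ∈ S) :
    g₂.Derives (u.map (mapSymbol f)) (v.map (mapSymbol f)) := by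
  induction h using Relation.ReflTransGen.head_induction_on with
  | refl => rfl
  | head hstep _ ih =>
    obtain ⟨ρ, hρ, hrw⟩ := hstep
    obtain ⟨p, q, rfl, rfl⟩ := hrw.exists_parts
    obtain ⟨hout, hmem⟩ := hS ρ hρ (hu _ (by simp))
    refine .head ⟨_, hmem, ?_⟩ (ih fun B hB => ?_)
    · simpa [mapSymbol] using ContextFreeRule.rewrites_of_exists_parts _
        (p.map (mapSymbol f)) (q.map (mapSymbol f))
    · simp only [List.mem_append] at hB
      rcases hB with (hB | hB) | hB
      · exact hu B (by simp [hB])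
      · exact hout B hB
      · exact hu B (by simp [hB])

variable (g : ContextFreeGrammar T)

def usedNTs : Set g.NT :=
  insert g.initial {A | ∃ ρ ∈ g.rules, ρ.input = A ∨ .nonterminal A ∈ ρ.output}

theorem initial_mem_usedNTs : g.initial ∈ usedNTs g := Set.mem_insert _ _

theorem finite_usedNTs : (usedNTs g).Finite := by
  have hnt (l : List (Symbol T g.NT)) : {A | .nonterminal A ∈ l}.Finite :=
    l.finite_toSet.preimage fun _ _ _ _ h => Symbol.nonterminal.inj h
  refine .insert _ ((g.rules.finite_toSet.biUnion fun ρ _ =>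
    (hnt ρ.output).insert ρ.input).subset ?_)
  rintro A ⟨ρ, hρ, h⟩
  exact Set.mem_biUnion hρ (by rcases h with rfl | h <;> simp_all)

noncomputable instance : Fintype (usedNTs g) := (finite_usedNTs g).fintype

/-- The junk value `g.initial` is taken only at nonterminals that occur nowhere in `g`. -/
noncomputable def toUsed (A : g.NT) : usedNTs g :=
  if h : A ∈ usedNTs g then ⟨A, h⟩ else ⟨g.initial, initial_mem_usedNTs g⟩

theorem toUsed_val {A : g.NT} (h : A ∈ usedNTs g) : (toUsed g A).1 = A := by
  simp [toUsed, h]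

noncomputable def ofCFG : OCFG (usedNTs g) T where
  prods B := (g.rules.toList.filter (·.input = B.1)).map
    fun ρ => ρ.output.map (Sym.ofSymbol ∘ mapSymbol (toUsed g))
  start := toUsed g g.initial

variable {g}

theorem mem_ofCFG_prods {B : usedNTs g} {r : List (Sym (usedNTs g) T)} :
    r ∈ (ofCFG g).prods B ↔
      ∃ ρ ∈ g.rules, ρ.input = B.1 ∧
        ρ.output.map (Sym.ofSymbol ∘ mapSymbol (toUsed g)) = r := by
  simp [ofCFG, and_assoc]

theorem mem_language_of_mem_langOf_ofCFG {w : List T} (h : w ∈ langOf (ofCFG g)) :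
    w ∈ g.language := by
  rw [langOf_eq_toCFG_language, ContextFreeGrammar.mem_language_iff] at h
  rw [ContextFreeGrammar.mem_language_iff]
  have := derives_map (g₂ := g) Subtype.val Set.univ (fun ρ' hρ' _ => ?_) h (by simp)
  · simpa [Function.comp_def, ofCFG, toUsed_val g (initial_mem_usedNTs g)] using this
  refine ⟨fun _ _ => trivial, ?_⟩
  obtain ⟨A, r, hr, rfl⟩ := OCFG.mem_toCFG_rules.1 hρ'
  obtain ⟨ρ, hρ, hin, rfl⟩ := mem_ofCFG_prods.1 hr
  convert hρ using 1
  refine ContextFreeRule.ext hin.symm ?_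
  dsimp only
  rw [List.map_map, List.map_map]
  refine (List.map_congr_left fun s hs => ?_).trans (List.map_id _)
  cases s with
  | terminal a => rfl
  | nonterminal B =>
    have hB : B ∈ usedNTs g := Set.mem_insert_of_mem _ ⟨ρ, hρ, .inr hs⟩
    simp [Sym.ofSymbol, Sym.toSymbol, toUsed_val g hB]

theorem mem_langOf_ofCFG_of_mem_language {w : List T} (h : w ∈ g.language) :
    w ∈ langOf (ofCFG g) := by
  rw [ContextFreeGrammar.mem_language_iff] at h
  rw [langOf_eq_toCFG_language, ContextFreeGrammar.mem_language_iff]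
  have := derives_map (g₂ := (ofCFG g).toCFG) (toUsed g) (usedNTs g) (fun ρ hρ hin => ?_) h
    (by simpa using initial_mem_usedNTs g)
  · simpa [Function.comp_def, ofCFG] using this
  refine ⟨fun B hB => Set.mem_insert_of_mem _ ⟨ρ, hρ, .inr hB⟩, ?_⟩
  refine OCFG.mem_toCFG_rules.2
    ⟨_, _, mem_ofCFG_prods.2 ⟨ρ, hρ, (toUsed_val g hin).symm, rfl⟩, ?_⟩
  simp only [List.map_map]
  congr 2
  ext s
  cases s <;> rfl

theorem langOf_ofCFG : langOf (ofCFG g) = g.language := by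
  ext w
  exact ⟨mem_language_of_mem_langOf_ofCFG, mem_langOf_ofCFG_of_mem_language⟩

end OfCFG

section IndexSequences

variable {G : OCFG N T}

@[simp] theorem PTree.idxSeq_leaf (a : T) : (PTree.leaf a : PTree N T).idxSeq = [] := by
  rw [PTree.idxSeq]

@[simp] theorem PTree.idxSeq_eps : (PTree.eps : PTree N T).idxSeq = [] := by
  rw [PTree.idxSeq]

@[simp] theorem PTree.idxSeq_node (A : N) (i : ℕ) (cs : List (PTree N T)) :
    (PTree.node A i cs).idxSeq = i :: (cs.map PTree.idxSeq).flatten := by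
  rw [PTree.idxSeq, List.attach_map_val]

mutual
/-- The index sequences of the parse trees from a fixed root form a prefix code. -/
theorem ParseFrom.eq_of_idxSeq_append_eq {A : N} {w w' : List T} {t t' : PTree N T}
    {s s' : List ℕ} :
    ParseFrom G A w t → ParseFrom G A w' t' →
      t.idxSeq ++ s = t'.idxSeq ++ s' → t = t' ∧ s = s'
  | .epsNode _ _ _, .epsNode _ _ _, h => by simp_all
  | .epsNode _ _ hi, .node _ _ _ _ _ hi' hne _, h => by
    simp only [PTree.idxSeq_node, List.cons_append, List.cons.injEq] at h
    simp_all
  | .node _ _ _ _ _ hi hne _, .epsNode _ _ hi', h => by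
    simp only [PTree.idxSeq_node, List.cons_append, List.cons.injEq] at h
    simp_all
  | .node _ i _ _ _ hi _ hs, .node _ _ _ _ _ hi' _ hs', h => by
    simp only [PTree.idxSeq_node, List.cons_append, List.cons.injEq] at h
    obtain ⟨rfl, hrest⟩ := h
    obtain rfl := Option.some_injective _ (hi.symm.trans hi')
    obtain ⟨rfl, rfl⟩ := hs.eq_of_idxSeq_append_eq hs' hrest
    exact ⟨rfl, rfl⟩
theorem ParseSeq.eq_of_idxSeq_append_eq {r : List (Sym N T)} {w w' : List T}
    {cs cs' : List (PTree N T)} {s s' : List ℕ} :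
    ParseSeq G r w cs → ParseSeq G r w' cs' →
      (cs.map PTree.idxSeq).flatten ++ s = (cs'.map PTree.idxSeq).flatten ++ s' →
      cs = cs' ∧ s = s'
  | .nil, .nil, h => ⟨rfl, h⟩
  | .consTm _ _ _ _ hs, .consTm _ _ _ _ hs', h => by
    simp only [List.map_cons, PTree.idxSeq_leaf, List.flatten_cons, List.nil_append] at h
    obtain ⟨rfl, rfl⟩ := hs.eq_of_idxSeq_append_eq hs' h
    exact ⟨rfl, rfl⟩
  | .consNt _ _ _ _ _ _ ht hs, .consNt _ _ _ _ _ _ ht' hs', h => by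
    simp only [List.map_cons, List.flatten_cons, List.append_assoc] at h
    obtain ⟨rfl, hrest⟩ := ht.eq_of_idxSeq_append_eq ht' h
    obtain ⟨rfl, rfl⟩ := hs.eq_of_idxSeq_append_eq hs' hrest
    exact ⟨rfl, rfl⟩
end

theorem ParseFrom.eq_of_idxSeq_eq {A : N} {w w' : List T} {t t' : PTree N T}
    (h : ParseFrom G A w t) (h' : ParseFrom G A w' t') (heq : t.idxSeq = t'.idxSeq) : t = t' :=
  (h.eq_of_idxSeq_append_eq (s := []) (s' := []) h' (by rw [heq])).1

end IndexSequences

section Finiteness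

variable {G : OCFG N T}

section IndexBound

variable [Fintype N]

def OCFG.maxProds (G : OCFG N T) : ℕ := Finset.univ.sup fun A => (G.prods A).length

theorem OCFG.lt_maxProds {A : N} {i : ℕ} {r : List (Sym N T)} (hi : (G.prods A)[i]? = some r) :
    i < G.maxProds :=
  (List.getElem?_eq_some_iff.1 hi).1.trans_le
    (Finset.le_sup (f := fun A => (G.prods A).length) (Finset.mem_univ A))

mutual
theorem ParseFrom.lt_maxProds {A : N} {w : List T} {t : PTree N T} :
    ParseFrom G A w t → ∀ j ∈ t.idxSeq, j < G.maxProds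
  | .epsNode _ _ hi, j, hj => by
    simp only [PTree.idxSeq_node, List.map_cons, PTree.idxSeq_eps, List.map_nil,
      List.flatten_cons, List.flatten_nil, List.append_nil, List.mem_singleton] at hj
    exact hj ▸ OCFG.lt_maxProds hi
  | .node _ _ _ _ _ hi _ hs, j, hj => by
    rcases List.mem_cons.1 (PTree.idxSeq_node .. ▸ hj) with rfl | hj
    · exact OCFG.lt_maxProds hi
    · exact hs.lt_maxProds j hj
theorem ParseSeq.lt_maxProds {r : List (Sym N T)} {w : List T} {cs : List (PTree N T)} :
    ParseSeq G r w cs → ∀ j ∈ (cs.map PTree.idxSeq).flatten, j < G.maxProds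
  | .nil, _, hj => by simp at hj
  | .consTm _ _ _ _ hs, j, hj => hs.lt_maxProds j (by simpa using hj)
  | .consNt _ _ _ _ _ _ ht hs, j, hj => by
    rw [List.map_cons, List.flatten_cons, List.mem_append] at hj
    rcases hj with hj | hj
    · exact ht.lt_maxProds j hj
    · exact hs.lt_maxProds j hj
end

theorem finite_parseTrees {w : List T} {K : ℕ}
    (hK : ∀ t ∈ parseTrees G w, t.idxSeq.length ≤ K) : (parseTrees G w).Finite := by
  have hseqs : {l : List ℕ | l.length ≤ K ∧ ∀ j ∈ l, j < G.maxProds}.Finite := by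
    refine ((List.finite_length_le (Fin G.maxProds) K).image (List.map Fin.val)).subset ?_
    rintro l ⟨hlen, hlt⟩
    lift l to List (Fin G.maxProds) using hlt
    exact ⟨l, by simpa using hlen, rfl⟩
  refine Set.Finite.of_finite_image (hseqs.subset ?_) fun t ht t' ht' => ht.eq_of_idxSeq_eq ht'
  rintro _ ⟨t, ht, rfl⟩
  exact ⟨hK t ht, ht.lt_maxProds⟩

end IndexBound

theorem wellOrderedG_of_finite_parseTrees (hfin : ∀ w, (parseTrees G w).Finite) :
    WellOrderedG G := by
  intro w Φ hΦ hne
  obtain ⟨t, ht, hmin⟩ := Set.exists_min_image Φ PTree.idxSeq ((hfin w).subset hΦ) hne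
  refine ⟨t, ht, fun t' ht' => ?_⟩
  rcases (hmin t' ht').lt_or_eq with hlt | heq
  · exact .inr hlt
  · exact .inl ((hΦ ht).eq_of_idxSeq_eq (hΦ ht') heq)

theorem WellOrderedG.hasLeastTrees (h : WellOrderedG G) : HasLeastTrees G := fun w hne =>
  h w (parseTrees G w) subset_rfl hne

end Finiteness

section ProperOn

variable {G : OCFG N T}

def IsProperRhs (r : List (Sym N T)) : Prop := r ≠ [] ∧ ∀ B, r ≠ [Sym.nt B]

def OCFG.ProperOn (G : OCFG N T) (S : Set N) : Prop :=
  ∀ A ∈ S, ∀ r ∈ G.prods A, IsProperRhs r ∧ ∀ B, Sym.nt B ∈ r → B ∈ S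

variable {S : Set N}

mutual
theorem ParseFrom.length_idxSeq_lt (hG : G.ProperOn S) {A : N} {w : List T} {t : PTree N T}
    (hA : A ∈ S) : ParseFrom G A w t → t.idxSeq.length < 2 * w.length
  | .epsNode _ _ hi => absurd rfl (hG A hA [] (List.mem_of_getElem? hi)).1.1
  | .node _ _ r _ _ hi _ hs => by
    obtain ⟨⟨hne, hunit⟩, hrS⟩ := hG A hA r (List.mem_of_getElem? hi)
    have hbound := hs.length_idxSeq_add_le hG hrS
    rw [PTree.idxSeq_node, List.length_cons]
    match r, hs with
    | [], _ => exact absurd rfl hne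
    | [.nt B], _ => exact absurd rfl (hunit B)
    | [.tm _], .consTm _ _ _ _ .nil => simp
    | _ :: _ :: _, _ => simp only [List.length_cons] at hbound; omega
theorem ParseSeq.length_idxSeq_add_le (hG : G.ProperOn S) {r : List (Sym N T)} {w : List T}
    {cs : List (PTree N T)} (hr : ∀ B, Sym.nt B ∈ r → B ∈ S) :
    ParseSeq G r w cs → (cs.map PTree.idxSeq).flatten.length + r.length ≤ 2 * w.length
  | .nil => le_rfl
  | .consTm _ _ _ _ hs => by
    have := hs.length_idxSeq_add_le hG fun B hB => hr B (List.mem_cons_of_mem _ hB)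
    simp only [List.map_cons, PTree.idxSeq_leaf, List.flatten_cons, List.nil_append,
      List.length_cons]
    omega
  | .consNt _ _ _ _ _ _ ht hs => by
    have h₁ := ht.length_idxSeq_lt hG (hr _ List.mem_cons_self)
    have h₂ := hs.length_idxSeq_add_le hG fun B hB => hr B (List.mem_cons_of_mem _ hB)
    simp only [List.map_cons, List.flatten_cons, List.length_append, List.length_cons]
    omega
end

theorem ParseFrom.ne_nil_of_properOn (hG : G.ProperOn S) {A : N} {w : List T} {t : PTree N T}
    (hA : A ∈ S) (h : ParseFrom G A w t) : w ≠ [] := by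
  rintro rfl
  simpa using h.length_idxSeq_lt hG hA

end ProperOn

section Proper

variable {G : OCFG N T}

def Nullable (G : OCFG N T) (A : N) : Prop := ∃ t, ParseFrom G A [] t

/-- All ways of deleting occurrences of nullable nonterminals from a right-hand side. -/
noncomputable def erasures (G : OCFG N T) : List (Sym N T) → List (List (Sym N T))
  | [] => [[]]
  | .tm a :: r => (erasures G r).map (.tm a :: ·)
  | .nt B :: r => (if Nullable G B then erasures G r else []) ++ (erasures G r).map (.nt B :: ·)

@[simp] theorem mem_erasures_nil {r' : List (Sym N T)} : r' ∈ erasures G [] ↔ r' = [] := by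
  simp [erasures]

theorem mem_erasures_tm {a : T} {r r' : List (Sym N T)} :
    r' ∈ erasures G (.tm a :: r) ↔ ∃ r'' ∈ erasures G r, .tm a :: r'' = r' := by
  simp [erasures]

theorem mem_erasures_nt {B : N} {r r' : List (Sym N T)} :
    r' ∈ erasures G (.nt B :: r) ↔
      (Nullable G B ∧ r' ∈ erasures G r) ∨ ∃ r'' ∈ erasures G r, .nt B :: r'' = r' := by
  by_cases hB : Nullable G B <;> simp [erasures, hB]

theorem ParseSeq.of_mem_erasures {r r' : List (Sym N T)} {w : List T}
    {cs' : List (PTree N T)} (hr' : r' ∈ erasures G r) (hs : ParseSeq G r' w cs') :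
    ∃ cs, ParseSeq G r w cs := by
  induction r generalizing r' w cs' with
  | nil =>
    obtain rfl := mem_erasures_nil.1 hr'
    obtain ⟨rfl, rfl⟩ := hs.nil_inv
    exact ⟨[], .nil⟩
  | cons s r ih =>
    cases s with
    | tm a =>
      obtain ⟨r'', hr'', rfl⟩ := mem_erasures_tm.1 hr'
      cases hs with
      | consTm _ _ _ _ hs =>
        obtain ⟨cs, hcs⟩ := ih hr'' hs
        exact ⟨_, .consTm a _ _ _ hcs⟩
    | nt B =>
      rcases mem_erasures_nt.1 hr' with ⟨⟨t, ht⟩, hr''⟩ | ⟨r'', hr'', rfl⟩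
      · obtain ⟨cs, hcs⟩ := ih hr'' hs
        exact ⟨_, .consNt B t [] _ _ _ ht hcs⟩
      · cases hs with
        | consNt _ t wB _ _ _ ht hs =>
          obtain ⟨cs, hcs⟩ := ih hr'' hs
          exact ⟨_, .consNt B t wB _ _ _ ht hcs⟩

/-- `A` derives `B` through a single rule whose other symbols are all nullable. -/
def ChainStep (G : OCFG N T) (A B : N) : Prop := ∃ r ∈ G.prods A, [Sym.nt B] ∈ erasures G r

def Chain (G : OCFG N T) : N → N → Prop := Relation.ReflTransGen (ChainStep G)

theorem Chain.exists_parseFrom {A B : N} {w : List T} (hAB : Chain G A B)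
    (h : ∃ t, ParseFrom G B w t) : ∃ t, ParseFrom G A w t := by
  induction hAB using Relation.ReflTransGen.head_induction_on with
  | refl => exact h
  | head hstep _ ih =>
    obtain ⟨t, ht⟩ := ih
    obtain ⟨r, hr, hB⟩ := hstep
    obtain ⟨cs, hcs⟩ := (ParseSeq.singleton ht).of_mem_erasures hB
    exact exists_parseFrom_of_parseSeq hr hcs

noncomputable def OCFG.proper [Fintype N] (G : OCFG N T) : OCFG N T where
  prods A := ((Finset.univ.filter (Chain G A)).toList.flatMap
    fun B => (G.prods B).flatMap (erasures G)).filter fun r => decide (IsProperRhs r)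
  start := G.start

variable [Fintype N]

theorem OCFG.mem_proper_prods {A : N} {r' : List (Sym N T)} :
    r' ∈ G.proper.prods A ↔
      (∃ B, Chain G A B ∧ ∃ r ∈ G.prods B, r' ∈ erasures G r) ∧ IsProperRhs r' := by
  simp [OCFG.proper]

theorem OCFG.properOn_proper : G.proper.ProperOn Set.univ := fun _ _ _ hr =>
  ⟨(OCFG.mem_proper_prods.1 hr).2, fun _ _ => trivial⟩

theorem Chain.exists_parseFrom_proper {A B : N} {w : List T} (hAB : Chain G A B)
    (h : ∃ t, ParseFrom G.proper B w t) : ∃ t, ParseFrom G.proper A w t := by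
  obtain ⟨r', hr', hs⟩ := exists_parseFrom_iff.1 h
  obtain ⟨⟨C, hBC, hC⟩, hproper⟩ := OCFG.mem_proper_prods.1 hr'
  exact exists_parseFrom_iff.2
    ⟨r', OCFG.mem_proper_prods.2 ⟨⟨C, hAB.trans hBC, hC⟩, hproper⟩, hs⟩

mutual
theorem ParseFrom.of_proper {A : N} {w : List T} {t : PTree N T} :
    ParseFrom G.proper A w t → ∃ t, ParseFrom G A w t
  | .epsNode _ _ hi => absurd rfl (OCFG.mem_proper_prods.1 (List.mem_of_getElem? hi)).2.1
  | .node _ _ _ _ _ hi _ hs => by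
    obtain ⟨⟨B, hAB, r, hr, hr'⟩, -⟩ := OCFG.mem_proper_prods.1 (List.mem_of_getElem? hi)
    obtain ⟨cs, hcs⟩ := hs.of_proper
    obtain ⟨cs, hcs⟩ := hcs.of_mem_erasures hr'
    exact hAB.exists_parseFrom (exists_parseFrom_of_parseSeq hr hcs)
theorem ParseSeq.of_proper {r : List (Sym N T)} {w : List T} {cs : List (PTree N T)} :
    ParseSeq G.proper r w cs → ∃ cs, ParseSeq G r w cs
  | .nil => ⟨[], .nil⟩
  | .consTm a _ _ _ hs => by
    obtain ⟨cs, hcs⟩ := hs.of_proper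
    exact ⟨_, .consTm a _ _ _ hcs⟩
  | .consNt A _ wA _ _ _ ht hs => by
    obtain ⟨t, ht⟩ := ht.of_proper
    obtain ⟨cs, hcs⟩ := hs.of_proper
    exact ⟨_, .consNt A t wA _ _ _ ht hcs⟩
end

mutual
theorem ParseFrom.proper {A : N} {w : List T} {t : PTree N T} (hw : w ≠ []) :
    ParseFrom G A w t → ∃ t, ParseFrom G.proper A w t
  | .epsNode _ _ _ => absurd rfl hw
  | .node _ _ r _ _ hi _ hs => by
    obtain ⟨r', hr', cs', hs'⟩ := hs.proper
    by_cases hproper : IsProperRhs r'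
    · exact exists_parseFrom_of_parseSeq (OCFG.mem_proper_prods.2
        ⟨⟨A, .refl, r, List.mem_of_getElem? hi, hr'⟩, hproper⟩) hs'
    · simp only [IsProperRhs, not_and_or, not_not, not_forall] at hproper
      rcases hproper with rfl | ⟨B, rfl⟩
      · exact absurd hs'.nil_inv.1 hw
      · cases hs' with
        | consNt _ t _ _ _ _ ht hnil =>
          obtain ⟨rfl, rfl⟩ := hnil.nil_inv
          exact Chain.exists_parseFrom_proper (.single ⟨r, List.mem_of_getElem? hi, hr'⟩)
            ⟨t, by simpa using ht⟩
theorem ParseSeq.proper {r : List (Sym N T)} {w : List T} {cs : List (PTree N T)} :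
    ParseSeq G r w cs → ∃ r' ∈ erasures G r, ∃ cs', ParseSeq G.proper r' w cs'
  | .nil => ⟨[], by simp, [], .nil⟩
  | .consTm a _ _ _ hs => by
    obtain ⟨r', hr', cs', hs'⟩ := hs.proper
    exact ⟨_, mem_erasures_tm.2 ⟨r', hr', rfl⟩, _, .consTm a _ _ _ hs'⟩
  | .consNt A t wA _ _ _ ht hs => by
    obtain ⟨r', hr', cs', hs'⟩ := hs.proper
    by_cases hwA : wA = []
    · subst hwA
      exact ⟨r', mem_erasures_nt.2 (.inl ⟨⟨t, ht⟩, hr'⟩), cs', hs'⟩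
    · obtain ⟨t', ht'⟩ := ht.proper hwA
      exact ⟨_, mem_erasures_nt.2 (.inr ⟨r', hr', rfl⟩), _, .consNt A t' wA _ _ _ ht' hs'⟩
end

theorem exists_parseFrom_proper_iff {A : N} {w : List T} :
    (∃ t, ParseFrom G.proper A w t) ↔ (∃ t, ParseFrom G A w t) ∧ w ≠ [] :=
  ⟨fun ⟨_, ht⟩ => ⟨ht.of_proper, ht.ne_nil_of_properOn OCFG.properOn_proper trivial⟩,
    fun ⟨⟨_, ht⟩, hw⟩ => ht.proper hw⟩

end Proper

section AddStart

variable {N' : Type}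

def Sym.map (f : N → N') : Sym N T → Sym N' T
  | .nt A => .nt (f A)
  | .tm a => .tm a

def ExtendsAlong (f : N → N') (G : OCFG N T) (G' : OCFG N' T) : Prop :=
  ∀ A, G'.prods (f A) = (G.prods A).map (List.map (Sym.map f))

section ExtendsAlong

variable {G : OCFG N T} {G' : OCFG N' T} {f : N → N'}

mutual
theorem ParseFrom.map (hf : ExtendsAlong f G G') {A : N} {w : List T} {t : PTree N T} :
    ParseFrom G A w t → ∃ t', ParseFrom G' (f A) w t'
  | .epsNode _ _ hi => exists_parseFrom_of_parseSeq
      (hf A ▸ List.mem_map_of_mem (List.mem_of_getElem? hi)) .nil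
  | .node _ _ _ _ _ hi _ hs => by
    obtain ⟨cs', hs'⟩ := hs.map hf
    exact exists_parseFrom_of_parseSeq (hf A ▸ List.mem_map_of_mem (List.mem_of_getElem? hi)) hs'
theorem ParseSeq.map (hf : ExtendsAlong f G G') {r : List (Sym N T)} {w : List T}
    {cs : List (PTree N T)} :
    ParseSeq G r w cs → ∃ cs', ParseSeq G' (r.map (Sym.map f)) w cs'
  | .nil => ⟨[], .nil⟩
  | .consTm a _ _ _ hs => by
    obtain ⟨cs', hs'⟩ := hs.map hf
    exact ⟨_, .consTm a _ _ _ hs'⟩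
  | .consNt A _ wA _ _ _ ht hs => by
    obtain ⟨t', ht'⟩ := ht.map hf
    obtain ⟨cs', hs'⟩ := hs.map hf
    exact ⟨_, .consNt (f A) t' wA _ _ _ ht' hs'⟩
end

mutual
theorem ParseFrom.of_map (hf : ExtendsAlong f G G') {A' : N'} {w : List T} {t' : PTree N' T} :
    ParseFrom G' A' w t' → ∀ A, f A = A' → ∃ t, ParseFrom G A w t
  | .epsNode _ _ hi, A, hA => by
    subst hA
    obtain ⟨r, hr, hnil⟩ := List.mem_map.1 (hf A ▸ List.mem_of_getElem? hi)
    obtain rfl := List.map_eq_nil_iff.1 hnil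
    exact exists_parseFrom_of_parseSeq hr .nil
  | .node _ _ _ _ _ hi _ hs, A, hA => by
    subst hA
    obtain ⟨r, hr, rfl⟩ := List.mem_map.1 (hf A ▸ List.mem_of_getElem? hi)
    obtain ⟨cs, hcs⟩ := hs.of_map hf r rfl
    exact exists_parseFrom_of_parseSeq hr hcs
theorem ParseSeq.of_map (hf : ExtendsAlong f G G') {r' : List (Sym N' T)} {w : List T}
    {cs' : List (PTree N' T)} :
    ParseSeq G' r' w cs' → ∀ r, r.map (Sym.map f) = r' → ∃ cs, ParseSeq G r w cs
  | .nil, [], _ => ⟨[], .nil⟩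
  | .consTm _ _ _ _ hs, .tm a :: r, h => by
    simp only [List.map_cons, Sym.map, List.cons.injEq, Sym.tm.injEq] at h
    obtain ⟨rfl, hr⟩ := h
    obtain ⟨cs, hcs⟩ := hs.of_map hf r hr
    exact ⟨_, .consTm a _ _ _ hcs⟩
  | .consNt _ _ wA _ _ _ ht hs, .nt A :: r, h => by
    obtain ⟨hA, hr⟩ := List.cons.inj h
    obtain ⟨t, ht⟩ := ht.of_map hf A (Sym.nt.inj hA)
    obtain ⟨cs, hcs⟩ := hs.of_map hf r hr
    exact ⟨_, .consNt A t wA _ _ _ ht hcs⟩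
  | .consTm _ _ _ _ _, .nt _ :: _, h => by simp [Sym.map] at h
  | .consNt _ _ _ _ _ _ _ _, .tm _ :: _, h => by simp [Sym.map] at h
end

theorem exists_parseFrom_map_iff (hf : ExtendsAlong f G G') {A : N} {w : List T} :
    (∃ t', ParseFrom G' (f A) w t') ↔ ∃ t, ParseFrom G A w t :=
  ⟨fun ⟨_, ht'⟩ => ht'.of_map hf A rfl, fun ⟨_, ht⟩ => ht.map hf⟩

end ExtendsAlong

noncomputable def OCFG.addStart (G : OCFG N T) (nullable : Prop) : OCFG (Option N) T where
  prods
    | some A => (G.prods A).map (List.map (Sym.map some))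
    | none => (G.prods G.start).map (List.map (Sym.map some)) ++ if nullable then [[]] else []
  start := none

variable {G : OCFG N T} {nullable : Prop}

theorem exists_parseFrom_addStart_iff {w : List T} :
    (∃ t, ParseFrom (G.addStart nullable) none w t) ↔
      (∃ t, ParseFrom G G.start w t) ∨ (nullable ∧ w = []) := by
  have hnil : (∃ cs, ParseSeq (G.addStart nullable) [] w cs) ↔ w = [] :=
    ⟨fun ⟨_, h⟩ => h.nil_inv.1, fun h => h ▸ ⟨[], .nil⟩⟩
  rw [← exists_parseFrom_map_iff (G' := G.addStart nullable) (f := some) fun _ => rfl,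
    exists_parseFrom_iff, exists_parseFrom_iff, ← hnil]
  by_cases h : nullable <;> simp [OCFG.addStart, h, or_and_right, exists_or]

end AddStart

section NormalForm

variable {G : OCFG N T} {nullable : Prop}

theorem IsProperRhs.map {N' : Type} {f : N → N'} {r : List (Sym N T)} (hr : IsProperRhs r) :
    IsProperRhs (r.map (Sym.map f)) := by
  refine ⟨by simpa using hr.1, fun B hB => ?_⟩
  obtain ⟨s, rfl, hs⟩ := List.map_eq_singleton_iff.1 hB
  cases s with
  | nt C => exact hr.2 C rfl
  | tm a => simp [Sym.map] at hs

theorem isSome_of_nt_mem_map_some {r : List (Sym N T)} {B : Option N}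
    (hB : Sym.nt B ∈ r.map (Sym.map some)) : B.isSome := by
  obtain ⟨s, -, hs⟩ := List.mem_map.1 hB
  cases s with
  | nt C => cases hs; rfl
  | tm a => cases hs

theorem OCFG.ProperOn.addStart (hG : G.ProperOn Set.univ) :
    (G.addStart nullable).ProperOn {o | o.isSome} := by
  rintro (_ | A) hA r' hr'
  · simp at hA
  obtain ⟨r, hr, rfl⟩ := List.mem_map.1 hr'
  exact ⟨(hG A trivial r hr).1.map, fun _ => isSome_of_nt_mem_map_some⟩

theorem ParseFrom.length_idxSeq_le_of_addStart (hG : G.ProperOn Set.univ) {w : List T}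
    {t : PTree (Option N) T} (h : ParseFrom (G.addStart nullable) none w t) :
    t.idxSeq.length ≤ 2 * w.length + 1 := by
  cases h with
  | epsNode => simp
  | node _ _ r _ _ hi hne hs =>
    have hr : r ∈ (G.prods G.start).map (List.map (Sym.map some)) := by
      by_cases h : nullable <;>
        simpa [OCFG.addStart, h, hne] using List.mem_of_getElem? hi
    obtain ⟨r, -, rfl⟩ := List.mem_map.1 hr
    have hbound := hs.length_idxSeq_add_le hG.addStart fun _ => isSome_of_nt_mem_map_some
    rw [PTree.idxSeq_node, List.length_cons]
    omega

variable [Fintype N]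

noncomputable def OCFG.normalForm (G : OCFG N T) : OCFG (Option N) T :=
  G.proper.addStart ([] ∈ langOf G)

theorem langOf_normalForm : langOf G.normalForm = langOf G := by
  ext w
  change (∃ t, ParseFrom _ none w t) ↔ ∃ t, _
  rw [OCFG.normalForm, exists_parseFrom_addStart_iff, exists_parseFrom_proper_iff]
  by_cases hw : w = []
  · simp [hw]
    rfl
  · simp [hw, OCFG.proper]

theorem wellOrderedG_normalForm : WellOrderedG G.normalForm :=
  wellOrderedG_of_finite_parseTrees fun _ =>
    finite_parseTrees fun _ ht => ParseFrom.length_idxSeq_le_of_addStart OCFG.properOn_proper ht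

theorem exists_wellOrderedG_langOf_eq {L : Language T} (hL : L.IsContextFree) :
    ∃ (N : Type) (_ : Fintype N) (G : OCFG N T), WellOrderedG G ∧ langOf G = L := by
  obtain ⟨g, rfl⟩ := hL
  exact ⟨_, inferInstance, (ofCFG g).normalForm, wellOrderedG_normalForm,
    langOf_normalForm.trans langOf_ofCFG⟩

end NormalForm

end Ocfg

open Ocfg

/-- The languages of well-ordered oCFGs are exactly the
context-free languages, and likewise for oCFGs having least parse trees. -/
theorem stmt5 {T : Type} (L : Language T) :
    ((∃ (N : Type) (_ : Fintype N) (G : OCFG N T),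
        WellOrderedG G ∧ langOf G = L) ↔ L.IsContextFree) ∧
    ((∃ (N : Type) (_ : Fintype N) (G : OCFG N T),
        HasLeastTrees G ∧ langOf G = L) ↔ L.IsContextFree) := by
  refine ⟨⟨?_, exists_wellOrderedG_langOf_eq⟩, ⟨?_, fun hL => ?_⟩⟩
  · rintro ⟨N, _, G, -, rfl⟩
    exact isContextFree_langOf G
  · rintro ⟨N, _, G, -, rfl⟩
    exact isContextFree_langOf G
  · obtain ⟨N, hN, G, hG, hGL⟩ := exists_wellOrderedG_langOf_eq hL
    exact ⟨N, hN, G, hG.hasLeastTrees, hGL⟩
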